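/- arXiv:2604.11973 — 6 statements merged into one kernel-verified Lean document; each statement's English description precedes it below -/
import Mathlib

section
/- Let $N\ge 2$ be an integer, $r>0$ and $0<\alpha\le 1/r$. Then $\int_0^{r} t (1-\alpha t)^{N-1}\,dt \le \frac{N}{N+1} \left(\int_0^{r} (1-\alpha t)^{N-1}\,dt\right)^2$. -/
/-! After the substitution `s = 1 - α t` both integrals are polynomial in `b = 1 - α r`:
with `I = ∫ (1 - α t)^(N-1) = (1 - b^N) / (N α)`, and `t = (1 - (1 - α t)) / α` giving
`∫ t (1 - α t)^(N-1) = (1 - (N+1) b^N + N b^(N+1)) / (N (N+1) α²)`, the claim becomes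
`1 - (N+1) b^N + N b^(N+1) ≤ (1 - b^N)²`, i.e. `b^N (b^N - 1 - N (b - 1)) ≥ 0`,
which is Bernoulli's inequality for `b ≥ 0`. -/

open intervalIntegral

theorem integral_one_sub_mul_pow {α : ℝ} (hα : α ≠ 0) (a b : ℝ) (n : ℕ) :
    ∫ t in a..b, (1 - α * t) ^ n =
      ((1 - α * a) ^ (n + 1) - (1 - α * b) ^ (n + 1)) / ((n + 1) * α) := by
  rw [integral_comp_sub_mul (fun s => s ^ n) hα, integral_pow, smul_eq_mul]
  field_simp

theorem integral_mul_one_sub_mul_pow {α : ℝ} (hα : α ≠ 0) (a b : ℝ) (n : ℕ) :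
    ∫ t in a..b, t * (1 - α * t) ^ n =
      α⁻¹ * ((∫ t in a..b, (1 - α * t) ^ n) - ∫ t in a..b, (1 - α * t) ^ (n + 1)) := by
  have hcont : ∀ k : ℕ, Continuous fun t : ℝ => (1 - α * t) ^ k := fun k => by fun_prop
  rw [← integral_sub ((hcont n).intervalIntegrable a b) ((hcont (n + 1)).intervalIntegrable a b),
    ← integral_const_mul]
  congr 1 with t
  field_simp
  ring

theorem one_sub_succ_mul_pow_add_mul_pow_succ_le {b : ℝ} (hb : 0 ≤ b) (N : ℕ) :
    1 - (N + 1) * b ^ N + N * b ^ (N + 1) ≤ (1 - b ^ N) ^ 2 := by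
  have bernoulli : 1 + N * (b - 1) ≤ b ^ N := by
    simpa using one_add_mul_le_pow (a := b - 1) (by linarith) N
  nlinarith [mul_nonneg (pow_nonneg hb N) (sub_nonneg.2 bernoulli), pow_succ b N]

theorem stmt_0 (N : ℕ) (hN : 2 ≤ N) (r α : ℝ) (hr : 0 < r) (hα : 0 < α)
    (hαr : α ≤ 1 / r) :
    (∫ t in (0:ℝ)..r, t * (1 - α * t) ^ (N - 1)) ≤
      ((N : ℝ) / (N + 1)) * (∫ t in (0:ℝ)..r, (1 - α * t) ^ (N - 1)) ^ 2 := by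
  obtain ⟨n, rfl⟩ : ∃ n, N = n + 1 := ⟨N - 1, by omega⟩
  have hb : 0 ≤ 1 - α * r := by
    rw [le_div_iff₀ hr] at hαr
    linarith
  rw [Nat.add_sub_cancel, integral_mul_one_sub_mul_pow hα.ne',
    integral_one_sub_mul_pow hα.ne', integral_one_sub_mul_pow hα.ne']
  set b := 1 - α * r
  have key := one_sub_succ_mul_pow_add_mul_pow_succ_le hb (n + 1)
  simp only [mul_zero, sub_zero, one_pow]
  push_cast at key ⊢
  calc α⁻¹ * ((1 - b ^ (n + 1)) / ((n + 1) * α) - (1 - b ^ (n + 1 + 1)) / ((n + 1 + 1) * α))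
      = (1 - (n + 1 + 1) * b ^ (n + 1) + (n + 1) * b ^ (n + 1 + 1)) /
          ((n + 1) * (n + 2) * α ^ 2) := by
        field_simp
        ring
    _ ≤ (1 - b ^ (n + 1)) ^ 2 / ((n + 1) * (n + 2) * α ^ 2) := by gcongr
    _ = (n + 1) / (n + 1 + 1) * ((1 - b ^ (n + 1)) / ((n + 1) * α)) ^ 2 := by
        field_simp
        ring
end

section
/- For every integer $N\ge 2$ and every real $x\in[0,1)$, the function $F_N(x):=(1-x^N)^2-(N+1)(1-x^N)+N(1-x^{N+1})$ satisfies $F_N(x)\ge 0$, with equality if and only if $x=0$. -/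
theorem one_add_mul_sub_lt_pow {x : ℝ} (hx0 : 0 ≤ x) (hx1 : x ≠ 1) {n : ℕ} (hn : 2 ≤ n) :
    1 + n * (x - 1) < x ^ n := by
  have hn' : (1 : ℝ) < n := by exact_mod_cast hn
  simpa [← Real.rpow_natCast] using
    one_add_mul_self_lt_rpow_one_add (by linarith) (sub_ne_zero.mpr hx1) hn'

theorem sq_one_sub_pow_sub_add_eq_mul {R : Type*} [CommRing R] (n : ℕ) (x : R) :
    (1 - x ^ n) ^ 2 - (n + 1) * (1 - x ^ n) + n * (1 - x ^ (n + 1)) =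
      x ^ n * (x ^ n - (1 + n * (x - 1))) := by
  ring

theorem stmt_2 (N : ℕ) (hN : 2 ≤ N) (x : ℝ) (hx0 : 0 ≤ x) (hx1 : x < 1) :
    0 ≤ (1 - x ^ N) ^ 2 - (N + 1) * (1 - x ^ N) + N * (1 - x ^ (N + 1)) ∧
    ((1 - x ^ N) ^ 2 - (N + 1) * (1 - x ^ N) + N * (1 - x ^ (N + 1)) = 0 ↔ x = 0) := by
  have hgap : 0 < x ^ N - (1 + N * (x - 1)) :=
    sub_pos.mpr (one_add_mul_sub_lt_pow hx0 hx1.ne hN)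
  rw [sq_one_sub_pow_sub_add_eq_mul]
  refine ⟨mul_nonneg (pow_nonneg hx0 N) hgap.le, ?_⟩
  rw [mul_eq_zero_iff_right hgap.ne', pow_eq_zero_iff (by omega)]
end

section
/- Let $N\ge 2$ be an integer, $r>0$, and $V$ a real number with $r/N \le V < r$. Then there exists a unique $\alpha\in(0,1/r]$ such that $\frac{1-(1-\alpha r)^N}{N\alpha} = V$. -/
/-!
With `t = 1 - α r`, the map `α ↦ t` is a bijection from `(0, 1/r]` onto `[0, 1)`, and the
geometric-sum identity `1 - t ^ N = α r (1 + t + ⋯ + t ^ (N - 1))` turns the equation into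
`1 + t + ⋯ + t ^ (N - 1) = N V / r`. For `N ≥ 2` the left side is continuous and strictly
increasing on `[0, 1)` with range `[1, N)`, which contains `N V / r` exactly when `r / N ≤ V < r`.
-/

open Finset

lemma geom_sum_strictMonoOn {R : Type*} [Semiring R] [PartialOrder R] [IsStrictOrderedRing R]
    {n : ℕ} (hn : 2 ≤ n) :
    StrictMonoOn (fun x : R => ∑ i ∈ range n, x ^ i) (Set.Ici 0) := by
  intro a ha b _ hab
  refine sum_lt_sum (fun i _ => pow_le_pow_left₀ ha hab.le i) ⟨1, mem_range.mpr hn, ?_⟩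
  simpa using hab

lemma exists_geom_sum_eq {n : ℕ} (hn : 2 ≤ n) {c : ℝ} (hc : c ∈ Set.Ico 1 (n : ℝ)) :
    ∃ x ∈ Set.Ico (0 : ℝ) 1, ∑ i ∈ range n, x ^ i = c := by
  have hcont : ContinuousOn (fun x : ℝ => ∑ i ∈ range n, x ^ i) (Set.Icc 0 1) := by fun_prop
  have hrange : Set.Ico 1 (n : ℝ) =
      Set.Ico (∑ i ∈ range n, (0 : ℝ) ^ i) (∑ i ∈ range n, (1 : ℝ) ^ i) := by
    simp [zero_pow_eq, show 0 < n by omega]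
  rw [hrange] at hc
  exact intermediate_value_Ico zero_le_one hcont hc

lemma one_sub_one_sub_mul_pow_div (N : ℕ) {a : ℝ} (ha : a ≠ 0) (r : ℝ) :
    (1 - (1 - a * r) ^ N) / (N * a) = r / N * ∑ i ∈ range N, (1 - a * r) ^ i := by
  have hgeom : 1 - (1 - a * r) ^ N = (∑ i ∈ range N, (1 - a * r) ^ i) * (a * r) := by
    linear_combination geom_sum_mul (1 - a * r) N
  rw [hgeom, mul_div_mul_comm, mul_div_cancel_left₀ _ ha]
  ring

lemma mem_Ioc_one_div_iff {r : ℝ} (hr : 0 < r) {a : ℝ} :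
    a ∈ Set.Ioc 0 (1 / r) ↔ 1 - a * r ∈ Set.Ico 0 1 := by
  simp only [Set.mem_Ioc, Set.mem_Ico, le_div_iff₀ hr]
  constructor <;> rintro ⟨h₁, h₂⟩ <;> constructor <;> nlinarith

theorem stmt_4 (N : ℕ) (hN : 2 ≤ N) (r V : ℝ) (hr : 0 < r)
    (hV1 : r / N ≤ V) (hV2 : V < r) :
    ∃! α : ℝ, α ∈ Set.Ioc 0 (1 / r) ∧ (1 - (1 - α * r) ^ N) / (N * α) = V := by
  have hN0 : (0 : ℝ) < N := by positivity
  have hreduce : ∀ α ∈ Set.Ioc 0 (1 / r), (1 - (1 - α * r) ^ N) / (N * α) = V ↔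
      ∑ i ∈ range N, (1 - α * r) ^ i = N * V / r := by
    intro α hα
    rw [one_sub_one_sub_mul_pow_div N hα.1.ne' r, eq_div_iff hr.ne']
    constructor <;> intro h <;> field_simp at h ⊢ <;> linarith
  have hc : N * V / r ∈ Set.Ico 1 (N : ℝ) := by
    rw [div_le_iff₀ hN0] at hV1
    constructor
    · rw [le_div_iff₀ hr]; linarith
    · rw [div_lt_iff₀ hr]; nlinarith
  obtain ⟨t, ht, hsum⟩ := exists_geom_sum_eq hN hc
  have htα : 1 - (1 - t) / r * r = t := by field_simp; ring
  have hα : (1 - t) / r ∈ Set.Ioc 0 (1 / r) := by rw [mem_Ioc_one_div_iff hr, htα]; exact ht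
  refine ⟨(1 - t) / r, ⟨hα, (hreduce _ hα).2 (by rw [htα]; exact hsum)⟩, ?_⟩
  rintro β ⟨hβ, hβV⟩
  have hβt : 1 - β * r = t :=
    (geom_sum_strictMonoOn hN).injOn ((mem_Ioc_one_div_iff hr).1 hβ).1 ht.1
      (((hreduce β hβ).1 hβV).trans hsum.symm)
  field_simp
  linarith
end

section
/- Let $\Omega\subset\mathbb{R}^N$ be a bounded convex open nonempty set and $\beta>0$. Then $\frac{1}{|\Omega|}\int_\Omega d_\Omega^{\beta}\,dx \ge \binom{N+\beta}{N}^{-1} r_\Omega^{\beta}$, with equality when $\Omega$ is the unit ball $B_1$. -/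
/-!
Let `d` be the distance to the boundary. On a convex open set `d` is concave, so if `z` is an
incenter and `r = d z`, the homothetic copy `z + (1 - t / r) • (Ω - z)` lies in the superlevel set
`{d > t}`, whence `|{d > t}| ≥ (1 - t / r) ^ N |Ω|` for `0 < t < r`. Inserting this into the
layer-cake formula `∫ d ^ β = β ∫₀^∞ t ^ (β - 1) |{d > t}| dt` gives the lower bound
`|Ω| r ^ β β B(β, N + 1)`, and `β B(β, N + 1) = Γ(β + 1) Γ(N + 1) / Γ(N + β + 1)`. For a ball the
superlevel sets are exactly the concentric balls of radius `r - t`, so the bound is attained.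
-/

open Real MeasureTheory Metric

/-- Distance from `x` to the boundary of `Ω`. -/
noncomputable def distBdry {N : ℕ} (Ω : Set (EuclideanSpace ℝ (Fin N)))
    (x : EuclideanSpace ℝ (Fin N)) : ℝ :=
  Metric.infDist x (frontier Ω)

/-- Inradius of `Ω`: the supremum over `Ω` of the distance to the boundary. -/
noncomputable def inradius {N : ℕ} (Ω : Set (EuclideanSpace ℝ (Fin N))) : ℝ :=
  ⨆ x ∈ Ω, distBdry Ω x

/-- Perimeter of a convex body: the `(N-1)`-dimensional Hausdorff measure of its boundary. -/
noncomputable def perim {N : ℕ} (Ω : Set (EuclideanSpace ℝ (Fin N))) : ℝ :=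
  (μH[(N : ℝ) - 1] (frontier Ω)).toReal

open Set
open ProbabilityTheory (beta)
open scoped Pointwise

theorem integral_rpow_mul_one_sub_rpow {a b : ℝ} (ha : 0 < a) (hb : 0 < b) :
    ∫ x in (0 : ℝ)..1, x ^ (a - 1) * (1 - x) ^ (b - 1) = beta a b := by
  rw [ProbabilityTheory.beta_eq_betaIntegralReal a b ha hb, Complex.betaIntegral,
    ← Complex.ofReal_re (∫ x in (0 : ℝ)..1, _), ← intervalIntegral.integral_ofReal]
  congr 1
  refine intervalIntegral.integral_congr fun x hx => ?_
  rw [uIcc_of_le zero_le_one] at hx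
  rw [Complex.ofReal_mul, Complex.ofReal_cpow hx.1, Complex.ofReal_cpow (by linarith [hx.2])]
  push_cast
  rfl

theorem integral_rpow_mul_one_sub_div_rpow {a b r : ℝ} (ha : 0 < a) (hb : 0 < b) (hr : 0 < r) :
    ∫ t in (0 : ℝ)..r, t ^ (a - 1) * (1 - t / r) ^ (b - 1) = r ^ a * beta a b := by
  have hscale : ∀ t ∈ uIcc 0 r, t ^ (a - 1) * (1 - t / r) ^ (b - 1)
      = r ^ (a - 1) * ((t / r) ^ (a - 1) * (1 - t / r) ^ (b - 1)) := fun t ht => by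
    rw [uIcc_of_le hr.le] at ht
    rw [div_rpow ht.1 hr.le, ← mul_assoc, mul_div_cancel₀ _ (rpow_pos_of_pos hr _).ne']
  rw [intervalIntegral.integral_congr hscale, intervalIntegral.integral_const_mul,
    intervalIntegral.integral_comp_div (fun x => x ^ (a - 1) * (1 - x) ^ (b - 1)) hr.ne',
    zero_div, div_self hr.ne', integral_rpow_mul_one_sub_rpow ha hb, smul_eq_mul, ← mul_assoc,
    ← rpow_add_one hr.ne', sub_add_cancel]

theorem ofReal_mul_lintegral_Ioo_one_sub_div_pow_mul_rpow {r β : ℝ} (hr : 0 < r) (hβ : 0 < β)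
    (N : ℕ) :
    ENNReal.ofReal β *
        ∫⁻ t in Ioo 0 r, ENNReal.ofReal ((1 - t / r) ^ N) * ENNReal.ofReal (t ^ (β - 1))
      = ENNReal.ofReal (r ^ β * (β * beta β (N + 1))) := by
  set g : ℝ → ℝ := fun t => t ^ (β - 1) * (1 - t / r) ^ N
  have hg_nonneg : ∀ t ∈ Ioo 0 r, 0 ≤ 1 - t / r := fun t ht =>
    sub_nonneg.mpr ((div_le_one hr).mpr ht.2.le)
  have hg : ∀ t ∈ Ioo 0 r,
      ENNReal.ofReal ((1 - t / r) ^ N) * ENNReal.ofReal (t ^ (β - 1)) = ENNReal.ofReal (g t) :=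
    fun t ht => by rw [← ENNReal.ofReal_mul (pow_nonneg (hg_nonneg t ht) N), mul_comm]
  have hint : IntegrableOn g (Ioc 0 r) := by
    rw [← intervalIntegrable_iff_integrableOn_Ioc_of_le hr.le]
    exact (intervalIntegral.intervalIntegrable_rpow' (by linarith)).mul_continuousOn
      (by fun_prop)
  have hval : ∫ t in Ioo 0 r, g t = r ^ β * beta β (N + 1) := by
    have h := integral_rpow_mul_one_sub_div_rpow hβ (b := N + 1) (by positivity) hr
    simp only [add_sub_cancel_right, rpow_natCast] at h
    rw [← integral_Ioc_eq_integral_Ioo, ← intervalIntegral.integral_of_le hr.le, h]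
  rw [setLIntegral_congr_fun measurableSet_Ioo hg, ← ofReal_integral_eq_lintegral_ofReal
    (hint.mono_set Ioo_subset_Ioc_self), hval, ← ENNReal.ofReal_mul hβ.le]
  · ring_nf
  · filter_upwards [ae_restrict_mem measurableSet_Ioo] with t ht
    exact mul_nonneg (rpow_nonneg ht.1.le _) (pow_nonneg (hg_nonneg t ht) N)

section LayerCake

variable {α : Type*} [MeasurableSpace α] {μ : Measure α} {f : α → ℝ} {r β : ℝ} {N : ℕ}
  {c : ENNReal}

theorem le_lintegral_rpow_of_le_measure_lt (hf0 : 0 ≤ᵐ[μ] f) (hf : AEMeasurable f μ)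
    (hr : 0 < r) (hβ : 0 < β)
    (h : ∀ t ∈ Ioo 0 r, c * ENNReal.ofReal ((1 - t / r) ^ N) ≤ μ {x | t < f x}) :
    c * ENNReal.ofReal (r ^ β * (β * beta β (N + 1))) ≤ ∫⁻ x, ENNReal.ofReal (f x ^ β) ∂μ := by
  rw [lintegral_rpow_eq_lintegral_meas_lt_mul μ hf0 hf hβ,
    ← ofReal_mul_lintegral_Ioo_one_sub_div_pow_mul_rpow hr hβ N, mul_left_comm]
  gcongr ENNReal.ofReal β * ?_
  calc c * ∫⁻ t in Ioo 0 r, ENNReal.ofReal ((1 - t / r) ^ N) * ENNReal.ofReal (t ^ (β - 1))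
      ≤ ∫⁻ t in Ioo 0 r, c * (ENNReal.ofReal ((1 - t / r) ^ N) * ENNReal.ofReal (t ^ (β - 1))) :=
        lintegral_const_mul_le _ _
    _ ≤ ∫⁻ t in Ioo 0 r, μ {x | t < f x} * ENNReal.ofReal (t ^ (β - 1)) :=
        setLIntegral_mono' measurableSet_Ioo fun t ht => by
          rw [← mul_assoc]; gcongr; exact h t ht
    _ ≤ ∫⁻ t in Ioi 0, μ {x | t < f x} * ENNReal.ofReal (t ^ (β - 1)) :=
        lintegral_mono_set Ioo_subset_Ioi_self

theorem lintegral_rpow_eq_of_measure_lt_eq (hf0 : 0 ≤ᵐ[μ] f) (hf : AEMeasurable f μ)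
    (hfr : ∀ᵐ x ∂μ, f x ≤ r) (hr : 0 < r) (hβ : 0 < β) (hc : c ≠ ⊤)
    (h : ∀ t ∈ Ioo 0 r, μ {x | t < f x} = c * ENNReal.ofReal ((1 - t / r) ^ N)) :
    ∫⁻ x, ENNReal.ofReal (f x ^ β) ∂μ = c * ENNReal.ofReal (r ^ β * (β * beta β (N + 1))) := by
  have hnull : ∀ t ∈ Ici r, μ {x | t < f x} * ENNReal.ofReal (t ^ (β - 1)) = 0 := fun t ht => by
    have : μ {x | t < f x} = 0 :=
      measure_eq_zero_iff_ae_notMem.mpr (hfr.mono fun x hx hlt => (hx.trans ht).not_gt hlt)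
    rw [this, zero_mul]
  rw [lintegral_rpow_eq_lintegral_meas_lt_mul μ hf0 hf hβ, ← Ioo_union_Ici_eq_Ioi hr,
    lintegral_union measurableSet_Ici ((Iio_disjoint_Ici le_rfl).mono_left Ioo_subset_Iio_self),
    setLIntegral_congr_fun measurableSet_Ici hnull, lintegral_zero, add_zero,
    setLIntegral_congr_fun measurableSet_Ioo fun t ht => by rw [h t ht, mul_assoc],
    lintegral_const_mul' _ _ hc, mul_left_comm,
    ofReal_mul_lintegral_Ioo_one_sub_div_pow_mul_rpow hr hβ N]

end LayerCake

section Metric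

variable {X : Type*} [PseudoMetricSpace X] {s : Set X} {x : X}

theorem le_infDist_compl_of_ball_subset (hs : s ≠ univ) {ρ : ℝ} (h : ball x ρ ⊆ s) :
    ρ ≤ infDist x sᶜ :=
  (le_infDist (nonempty_compl.mpr hs)).mpr fun _ hy =>
    not_lt.mp fun hlt => hy (h (mem_ball'.mpr hlt))

theorem IsOpen.infDist_compl_pos (hso : IsOpen s) (hs : s ≠ univ) (hx : x ∈ s) :
    0 < infDist x sᶜ :=
  (hso.isClosed_compl.notMem_iff_infDist_pos (nonempty_compl.mpr hs)).mp (not_not_intro hx)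

end Metric

section Convex

variable {E : Type*} [NormedAddCommGroup E] [NormedSpace ℝ E] {s : Set E} {x y z : E} {a b : ℝ}

theorem Convex.ball_combo_subset (hs : Convex ℝ s) (ha : 0 < a) (hb : 0 < b) (hab : a + b = 1)
    {ρ σ : ℝ} (hρ : 0 < ρ) (hσ : 0 < σ) (hx : ball x ρ ⊆ s) (hy : ball y σ ⊆ s) :
    ball (a • x + b • y) (a * ρ + b * σ) ⊆ s := by
  have hsmul : ∀ {e : ℝ}, 0 < e → ∀ (w : E) (τ : ℝ), ball (e • w) (e * τ) = e • ball w τ :=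
    fun he w τ => by rw [_root_.smul_ball he.ne', norm_of_nonneg he.le]
  rw [← ball_add_ball (mul_pos ha hρ) (mul_pos hb hσ), hsmul ha, hsmul hb]
  exact (add_subset_add (smul_set_mono hx) (smul_set_mono hy)).trans
    (convex_iff_pointwise_add_subset.mp hs ha.le hb.le hab)

theorem Convex.combo_infDist_compl_le (hs : Convex ℝ s) (hso : IsOpen s) (hx : x ∈ s)
    (hy : y ∈ s) (ha : 0 < a) (hb : 0 < b) (hab : a + b = 1) :
    a * infDist x sᶜ + b * infDist y sᶜ ≤ infDist (a • x + b • y) sᶜ := by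
  rcases eq_or_ne s univ with rfl | hne
  · simp
  exact le_infDist_compl_of_ball_subset hne (hs.ball_combo_subset ha hb hab
    (hso.infDist_compl_pos hne hx) (hso.infDist_compl_pos hne hy) ball_infDist_compl_subset
    ball_infDist_compl_subset)

variable [FiniteDimensional ℝ E]

theorem infDist_frontier_eq_infDist_compl (hx : x ∈ s) :
    infDist x (frontier s) = infDist x sᶜ := by
  rcases eq_or_ne s univ with rfl | hne
  · simp
  obtain ⟨y, hyf, hyd⟩ := exists_mem_frontier_infDist_compl_eq_dist hx hne
  refine le_antisymm (hyd ▸ infDist_le_dist_of_mem hyf) ?_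
  rw [← infDist_closure (s := sᶜ)]
  exact infDist_le_infDist_of_subset (frontier_compl s ▸ frontier_subset_closure) ⟨y, hyf⟩

theorem Convex.combo_infDist_frontier_le (hs : Convex ℝ s) (hso : IsOpen s) (hx : x ∈ s)
    (hy : y ∈ s) (ha : 0 < a) (hb : 0 < b) (hab : a + b = 1) :
    a * infDist x (frontier s) + b * infDist y (frontier s)
      ≤ infDist (a • x + b • y) (frontier s) := by
  rw [infDist_frontier_eq_infDist_compl hx, infDist_frontier_eq_infDist_compl hy,
    infDist_frontier_eq_infDist_compl (hs hx hy ha.le hb.le hab)]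
  exact hs.combo_infDist_compl_le hso hx hy ha hb hab

theorem IsOpen.infDist_frontier_pos (hso : IsOpen s) (hs : s ≠ univ) (hx : x ∈ s) :
    0 < infDist x (frontier s) :=
  infDist_frontier_eq_infDist_compl hx ▸ hso.infDist_compl_pos hs hx

theorem IsOpen.exists_isMaxOn_infDist_frontier (hso : IsOpen s) (hsb : Bornology.IsBounded s)
    (hne : s.Nonempty) :
    ∃ z ∈ s, IsMaxOn (fun x => infDist x (frontier s)) s z := by
  obtain ⟨z, hzs, hz⟩ := hsb.isCompact_closure.exists_isMaxOn (hne.mono subset_closure)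
    (continuous_infDist_pt _).continuousOn
  refine ⟨z, ?_, fun x hx => hz (subset_closure hx)⟩
  rcases eq_or_ne s univ with rfl | hU
  · trivial
  obtain ⟨w, hw⟩ := hne
  refine (closure_eq_self_union_frontier s ▸ hzs).resolve_right fun hzf => ?_
  have hpos : 0 < infDist z (frontier s) :=
    (hso.infDist_frontier_pos hU hw).trans_le (hz (subset_closure hw))
  rw [infDist_zero_of_mem hzf] at hpos
  exact lt_irrefl 0 hpos

variable [MeasurableSpace E] [BorelSpace E] (μ : Measure E) [μ.IsAddHaarMeasure]

theorem Bornology.IsBounded.ofReal_setIntegral_infDist_rpow {t : Set E}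
    (ht : Bornology.IsBounded t) (s : Set E) {β : ℝ} (hβ : 0 ≤ β) :
    ENNReal.ofReal (∫ x in t, infDist x s ^ β ∂μ)
      = ∫⁻ x in t, ENNReal.ofReal (infDist x s ^ β) ∂μ :=
  ofReal_integral_eq_lintegral_ofReal
    ((((continuous_rpow_const hβ).comp (continuous_infDist_pt s)).continuousOn.integrableOn_compact
      ht.isCompact_closure).mono_set subset_closure)
    (ae_of_all _ fun _ => rpow_nonneg infDist_nonneg β)

theorem Convex.measure_mul_le_measure_superlevel_infDist_frontier (hs : Convex ℝ s)
    (hso : IsOpen s) (hz : z ∈ s) {t : ℝ} (ht : t ∈ Ioo 0 (infDist z (frontier s))) :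
    μ s * ENNReal.ofReal ((1 - t / infDist z (frontier s)) ^ Module.finrank ℝ E)
      ≤ μ ({x | t < infDist x (frontier s)} ∩ s) := by
  set r := infDist z (frontier s)
  have hr : 0 < r := ht.1.trans ht.2
  have hne : s ≠ univ := by
    rintro rfl
    simp [r] at hr
  have hq : 0 < t / r := div_pos ht.1 hr
  have hc : 0 < 1 - t / r := sub_pos.mpr ((div_lt_one hr).mpr ht.2)
  have hsub : AffineMap.homothety z (1 - t / r) '' s ⊆ {x | t < infDist x (frontier s)} ∩ s := by
    rintro _ ⟨y, hy, rfl⟩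
    have hsum : (1 - t / r) + t / r = 1 := sub_add_cancel 1 _
    have hyp : AffineMap.homothety z (1 - t / r) y = (1 - t / r) • y + (t / r) • z := by
      rw [AffineMap.homothety_eq_lineMap, AffineMap.lineMap_apply_module, sub_sub_cancel, add_comm]
    rw [hyp]
    refine ⟨?_, hs hy hz hc.le hq.le hsum⟩
    have hconc := hs.combo_infDist_frontier_le hso hy hz hc hq hsum
    rw [div_mul_cancel₀ t hr.ne'] at hconc
    have := mul_pos hc (hso.infDist_frontier_pos hne hy)
    exact (lt_add_of_pos_left t this).trans_le hconc
  calc μ s * ENNReal.ofReal ((1 - t / r) ^ Module.finrank ℝ E)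
      = μ (AffineMap.homothety z (1 - t / r) '' s) := by
        rw [Measure.addHaar_image_homothety, abs_of_nonneg (by positivity), mul_comm]
    _ ≤ _ := measure_mono hsub

theorem Convex.mul_le_setIntegral_infDist_frontier_rpow (hs : Convex ℝ s) (hso : IsOpen s)
    (hsb : Bornology.IsBounded s) (hz : z ∈ s) {β : ℝ} (hβ : 0 < β) :
    μ.real s * (infDist z (frontier s) ^ β * (β * beta β (Module.finrank ℝ E + 1)))
      ≤ ∫ x in s, infDist x (frontier s) ^ β ∂μ := by
  have hI : 0 ≤ ∫ x in s, infDist x (frontier s) ^ β ∂μ :=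
    integral_nonneg fun _ => rpow_nonneg infDist_nonneg β
  rcases (infDist_nonneg (x := z) (s := frontier s)).eq_or_lt with hr | hr
  · rwa [← hr, zero_rpow hβ.ne', zero_mul, mul_zero]
  have hcont : Continuous fun x => infDist x (frontier s) := continuous_infDist_pt _
  have hlayer := le_lintegral_rpow_of_le_measure_lt (μ := μ.restrict s) (c := μ s)
    (ae_of_all _ fun x => infDist_nonneg) hcont.aemeasurable hr hβ fun t ht => by
      rw [Measure.restrict_apply (measurableSet_lt measurable_const hcont.measurable)]
      exact hs.measure_mul_le_measure_superlevel_infDist_frontier μ hso hz ht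
  rwa [← hsb.ofReal_setIntegral_infDist_rpow μ _ hβ.le, ← ofReal_measureReal hsb.measure_lt_top.ne,
    ← ENNReal.ofReal_mul measureReal_nonneg, ENNReal.ofReal_le_ofReal_iff hI] at hlayer

end Convex

section Ball

variable {E : Type*} [NormedAddCommGroup E] [NormedSpace ℝ E] [Nontrivial E] {x c : E} {r : ℝ}

theorem ball_ne_univ (c : E) (r : ℝ) : ball c r ≠ univ :=
  fun h => NormedSpace.unbounded_univ ℝ E (h ▸ isBounded_ball)

theorem infDist_compl_ball (hx : x ∈ ball c r) : infDist x (ball c r)ᶜ = r - dist x c := by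
  refine le_antisymm ?_ (le_infDist_compl_of_ball_subset (ball_ne_univ c r)
    (ball_subset_ball' (sub_add_cancel r _).le))
  rcases eq_or_ne x c with rfl | hxc
  · obtain ⟨v, hv⟩ := exists_norm_eq E (pos_of_mem_ball hx).le
    calc infDist x (ball x r)ᶜ ≤ dist x (x + v) :=
          infDist_le_dist_of_mem (by simp [dist_self_add_left, hv])
      _ = r - dist x x := by simp [dist_self_add_right, hv]
  · have hδ : 0 < dist x c := dist_pos.mpr hxc
    have hrδ : 1 ≤ r / dist x c := (one_le_div hδ).mpr (mem_ball.mp hx).le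
    calc infDist x (ball c r)ᶜ ≤ dist (AffineMap.lineMap c x (r / dist x c)) x := by
          rw [dist_comm]
          refine infDist_le_dist_of_mem ?_
          rw [mem_compl_iff, mem_ball, dist_lineMap_left, Real.norm_of_nonneg (by positivity),
            dist_comm c x, div_mul_cancel₀ r hδ.ne']
          exact lt_irrefl r
      _ = r - dist x c := by
          rw [dist_lineMap_right, Real.norm_of_nonpos (by linarith), dist_comm c x]
          field_simp
          ring

variable [FiniteDimensional ℝ E]

theorem infDist_frontier_ball (hx : x ∈ ball c r) :
    infDist x (frontier (ball c r)) = r - dist x c := by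
  rw [infDist_frontier_eq_infDist_compl hx, infDist_compl_ball hx]

theorem superlevel_infDist_frontier_ball {t : ℝ} (ht : 0 ≤ t) :
    {x | t < infDist x (frontier (ball c r))} ∩ ball c r = ball c (r - t) := by
  ext x
  refine ⟨fun ⟨hlt, hx⟩ => ?_, fun hx => ?_⟩
  · rw [mem_ofPred_eq, infDist_frontier_ball hx] at hlt
    exact mem_ball.mpr (by linarith)
  · have hx' : x ∈ ball c r := ball_subset_ball (by linarith) hx
    refine ⟨?_, hx'⟩
    rw [mem_ofPred_eq, infDist_frontier_ball hx']
    linarith [mem_ball.mp hx]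

variable [MeasurableSpace E] [BorelSpace E] (μ : Measure E) [μ.IsAddHaarMeasure]

theorem setIntegral_infDist_frontier_ball_rpow (c : E) (hr : 0 < r) {β : ℝ} (hβ : 0 < β) :
    ∫ x in ball c r, infDist x (frontier (ball c r)) ^ β ∂μ
      = μ.real (ball c r) * (r ^ β * (β * beta β (Module.finrank ℝ E + 1))) := by
  have hcont : Continuous fun x => infDist x (frontier (ball c r)) := continuous_infDist_pt _
  have hle : ∀ᵐ x ∂μ.restrict (ball c r), infDist x (frontier (ball c r)) ≤ r :=
    ae_restrict_of_forall_mem measurableSet_ball fun x hx => by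
      rw [infDist_frontier_ball hx]; linarith [dist_nonneg (x := x) (y := c)]
  have hlayer := lintegral_rpow_eq_of_measure_lt_eq (μ := μ.restrict (ball c r))
    (c := μ (ball c r)) (N := Module.finrank ℝ E) (ae_of_all _ fun x => infDist_nonneg)
    hcont.aemeasurable hle hr hβ measure_ball_lt_top.ne fun t ht => by
      have hrt : 0 < r - t := sub_pos.mpr ht.2
      rw [Measure.restrict_apply (measurableSet_lt measurable_const hcont.measurable),
        superlevel_infDist_frontier_ball ht.1.le, Measure.addHaar_ball_of_pos μ c hrt,
        Measure.addHaar_ball_of_pos μ c hr, mul_right_comm, ← ENNReal.ofReal_mul (by positivity),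
        ← mul_pow, mul_sub, mul_one, mul_div_cancel₀ t hr.ne']
  rw [← isBounded_ball.ofReal_setIntegral_infDist_rpow μ _ hβ.le,
    ← ofReal_measureReal measure_ball_lt_top.ne, ← ENNReal.ofReal_mul measureReal_nonneg] at hlayer
  exact (ENNReal.ofReal_eq_ofReal_iff (integral_nonneg fun _ => rpow_nonneg infDist_nonneg β)
    (mul_nonneg measureReal_nonneg (mul_nonneg (rpow_nonneg hr.le β)
      (mul_nonneg hβ.le (ProbabilityTheory.beta_pos hβ (Nat.cast_add_one_pos _)).le)))).mp hlayer

end Ball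

section Euclidean

variable {N : ℕ} {Ω : Set (EuclideanSpace ℝ (Fin N))}

theorem inradius_eq_of_isMaxOn {z : EuclideanSpace ℝ (Fin N)} (hz : z ∈ Ω)
    (hmax : IsMaxOn (distBdry Ω) Ω z) : inradius Ω = distBdry Ω z := by
  refine ciSup_eq_of_forall_le_of_forall_lt_exists_gt (fun x => ?_)
    fun w hw => ⟨z, by rwa [ciSup_pos hz]⟩
  by_cases hx : x ∈ Ω
  · rw [ciSup_pos hx]
    exact hmax hx
  · rw [ciSup_neg hx, Real.sSup_empty]
    exact infDist_nonneg

theorem inv_volume_mul_setIntegral_distBdry_ball_rpow (c : EuclideanSpace ℝ (Fin N)) {r β : ℝ}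
    (hr : 0 < r) (hβ : 0 < β) :
    (volume (ball c r)).toReal⁻¹ * ∫ x in ball c r, distBdry (ball c r) x ^ β
      = β * beta β (N + 1) * inradius (ball c r) ^ β := by
  rcases subsingleton_or_nontrivial (EuclideanSpace ℝ (Fin N)) with hE | hE
  · have hU : ball c r = univ := Subsingleton.eq_univ_of_nonempty ⟨c, mem_ball_self hr⟩
    have hd : ∀ x, distBdry (ball c r) x = 0 := fun x => by
      rw [distBdry, hU, frontier_univ, infDist_empty]
    rw [inradius_eq_of_isMaxOn (mem_ball_self hr) fun x _ => by simp [hd]]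
    simp [hd, zero_rpow hβ.ne']
  have hV : 0 < (volume (ball c r)).toReal :=
    ENNReal.toReal_pos (measure_ball_pos volume c hr).ne' measure_ball_lt_top.ne
  have hd : ∀ x ∈ ball c r, distBdry (ball c r) x = r - dist x c := fun x hx =>
    infDist_frontier_ball hx
  have hinr : inradius (ball c r) = r := by
    rw [inradius_eq_of_isMaxOn (mem_ball_self hr) fun x hx => ?_, hd c (mem_ball_self hr),
      dist_self, sub_zero]
    simp only [mem_ofPred_eq, hd x hx, hd c (mem_ball_self hr), dist_self]
    linarith [dist_nonneg (x := x) (y := c)]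
  have hint := setIntegral_infDist_frontier_ball_rpow (volume : Measure (EuclideanSpace ℝ (Fin N)))
    c hr hβ
  rw [finrank_euclideanSpace_fin] at hint
  simp only [distBdry, hint, hinr, measureReal_def]
  field_simp

end Euclidean

theorem inv_gamma_div_eq_mul_beta (N : ℕ) {β : ℝ} (hβ : 0 < β) :
    (Gamma (N + β + 1) / (Gamma (β + 1) * Gamma (N + 1)))⁻¹ = β * beta β (N + 1) := by
  rw [inv_div, ProbabilityTheory.beta, Gamma_add_one hβ.ne',
    show (N : ℝ) + β + 1 = β + (N + 1) by ring]
  ring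

theorem stmt_14 (N : ℕ) (Ω : Set (EuclideanSpace ℝ (Fin N)))
    (hconv : Convex ℝ Ω) (hopen : IsOpen Ω) (hbdd : Bornology.IsBounded Ω)
    (hne : Ω.Nonempty) (β : ℝ) (hβ : 0 < β) :
    (Gamma (N + β + 1) / (Gamma (β + 1) * Gamma (N + 1)))⁻¹ * inradius Ω ^ β ≤
      (volume Ω).toReal⁻¹ * ∫ x in Ω, distBdry Ω x ^ β ∧
    (Ω = Metric.ball (0 : EuclideanSpace ℝ (Fin N)) 1 →
      (volume Ω).toReal⁻¹ * (∫ x in Ω, distBdry Ω x ^ β) =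
        (Gamma (N + β + 1) / (Gamma (β + 1) * Gamma (N + 1)))⁻¹ * inradius Ω ^ β) := by
  rw [inv_gamma_div_eq_mul_beta N hβ]
  refine ⟨?_, fun hΩ => hΩ ▸ inv_volume_mul_setIntegral_distBdry_ball_rpow 0 one_pos hβ⟩
  obtain ⟨z, hz, hmax⟩ := hopen.exists_isMaxOn_infDist_frontier hbdd hne
  have hV : 0 < (volume Ω).toReal :=
    ENNReal.toReal_pos (hopen.measure_pos volume hne).ne' hbdd.measure_lt_top.ne
  have h := hconv.mul_le_setIntegral_infDist_frontier_rpow volume hopen hbdd hz hβ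
  rw [finrank_euclideanSpace_fin, measureReal_def] at h
  rw [inradius_eq_of_isMaxOn hz hmax, distBdry, le_inv_mul_iff₀ hV]
  calc _ = (volume Ω).toReal * (infDist z (frontier Ω) ^ β * (β * beta β (N + 1))) := by ring
    _ ≤ _ := h
end

section
/- Let $\Omega\subset\mathbb{R}^N$ ($N\ge 2$) be a bounded convex open nonempty set. For every $t\ge 0$, the interior parallel set $\Omega(t)=\{x\in\Omega: d_\Omega(x)>t\}$ is convex, and its perimeter satisfies $P(\Omega(t))\ge P(\Omega)\left(1-\frac{t}{r_\Omega}\right)_+^{N-1}$, where $(s)_+ = \max(s,0)$. -/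
open Real MeasureTheory Metric

/-!
The distance to the boundary is concave on a convex open set: balls of radii `d(x)` and `d(y)`
around `x` and `y` combine, by Minkowski addition, into a ball of radius `a d(x) + b d(y)` around
`a x + b y`. Hence `Ω(t)` is a superlevel set of a concave function, and if `x₀` realizes the
inradius `r`, the homothetic copy of `Ω` with centre `x₀` and ratio `1 - t / r` lies in `Ω(t)`.

For convex `K ⊆ L` with `K` open, the metric projection onto `closure K` is `1`-Lipschitz and maps
`∂L` onto `∂K` (walk from a point of `∂K` along an outer normal until leaving `L`), so
`ℋ^{N-1}(∂K) ≤ ℋ^{N-1}(∂L)`. Together with the scaling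
`ℋ^{N-1}(∂(x₀ + λ(Ω - x₀))) = λ^{N-1} ℋ^{N-1}(∂Ω)` this gives the bound.
-/
open Set Bornology AffineMap
open scoped RealInnerProductSpace Pointwise ENNReal NNReal

theorem IsPreconnected.inter_frontier_nonempty {X : Type*} [TopologicalSpace X] {s t : Set X}
    (hs : IsPreconnected s) (hst : (s ∩ t).Nonempty) (hsnt : (s \ t).Nonempty) :
    (s ∩ frontier t).Nonempty := by
  by_contra h
  have hcover : s ⊆ interior t ∪ (closure t)ᶜ := by
    intro x hx
    by_cases hxt : x ∈ closure t
    · exact Or.inl (by_contra fun hxi => h ⟨x, hx, hxt, hxi⟩)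
    · exact Or.inr hxt
  obtain ⟨x, hxs, hxt⟩ := hst
  have hxi : x ∈ interior t :=
    (hcover hxs).resolve_right (not_not.2 (subset_closure hxt))
  have hsi := hs.subset_left_of_subset_union isOpen_interior isClosed_closure.isOpen_compl
    (disjoint_compl_right.mono_left (interior_subset.trans subset_closure)) hcover ⟨x, hxs, hxi⟩
  obtain ⟨y, hys, hyt⟩ := hsnt
  exact hyt (interior_subset (hsi hys))

theorem Real.biSup_eq_of_isMaxOn {α : Type*} {s : Set α} {f : α → ℝ} {x₀ : α}
    (hx₀ : x₀ ∈ s) (hmax : IsMaxOn f s x₀) (h0 : 0 ≤ f x₀) :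
    ⨆ x ∈ s, f x = f x₀ := by
  have hle : ∀ x, ⨆ _ : x ∈ s, f x ≤ f x₀ := fun x => Real.iSup_le (fun hx => hmax hx) h0
  refine le_antisymm (Real.iSup_le hle h0) ?_
  exact le_ciSup_of_le ⟨f x₀, forall_mem_range.2 hle⟩ x₀
    (ciSup_pos (f := fun _ => f x₀) hx₀).ge

section MetricSpace

variable {X : Type*} [MetricSpace X] {Ω : Set X} {x : X}

theorem le_infDist_frontier (hΩ : IsOpen Ω) (hfr : (frontier Ω).Nonempty) {r : ℝ}
    (h : ball x r ⊆ Ω) : r ≤ infDist x (frontier Ω) :=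
  (le_infDist hfr).2 fun _ hy => not_lt.1 fun hlt =>
    hΩ.inter_frontier_eq.subset ⟨h (mem_ball'.2 hlt), hy⟩

theorem infDist_frontier_pos (hΩ : IsOpen Ω) (hfr : (frontier Ω).Nonempty) (hx : x ∈ Ω) :
    0 < infDist x (frontier Ω) :=
  (isClosed_frontier.notMem_iff_infDist_pos hfr).1 fun h => hΩ.inter_frontier_eq.subset ⟨hx, h⟩

theorem exists_isMaxOn_infDist_frontier [ProperSpace X] (hbdd : IsBounded Ω) (hne : Ω.Nonempty) :
    ∃ x₀ ∈ Ω, IsMaxOn (fun x => infDist x (frontier Ω)) Ω x₀ := by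
  obtain ⟨xM, hxM, hmax⟩ := hbdd.isCompact_closure.exists_isMaxOn (hne.mono subset_closure)
    (continuous_infDist_pt _).continuousOn
  by_cases hxMΩ : xM ∈ Ω
  · exact ⟨xM, hxMΩ, hmax.on_subset subset_closure⟩
  · have h0 : infDist xM (frontier Ω) = 0 :=
      infDist_zero_of_mem ⟨hxM, fun h => hxMΩ (interior_subset h)⟩
    obtain ⟨x, hx⟩ := hne
    exact ⟨x, hx, fun y hy => (hmax (subset_closure hy)).trans (h0.le.trans infDist_nonneg)⟩

end MetricSpace

section NormedSpace

variable {E : Type*} [NormedAddCommGroup E] [NormedSpace ℝ E] {Ω : Set E} {x : E}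

theorem ball_infDist_frontier_subset (hx : x ∈ Ω) : ball x (infDist x (frontier Ω)) ⊆ Ω := by
  by_contra h
  obtain ⟨y, hy, -⟩ := not_subset.1 h
  obtain ⟨z, hz, hzΩ⟩ := (convex_ball x _).isPreconnected.inter_frontier_nonempty
    ⟨x, mem_ball_self (pos_of_mem_ball hy), hx⟩ (not_subset.1 h)
  exact disjoint_left.1 disjoint_ball_infDist hz hzΩ

theorem concaveOn_infDist_frontier (hconv : Convex ℝ Ω) (hΩ : IsOpen Ω) :
    ConcaveOn ℝ Ω (fun x => infDist x (frontier Ω)) := by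
  rcases (frontier Ω).eq_empty_or_nonempty with hfr | hfr
  · simpa only [hfr, infDist_empty] using concaveOn_const (0 : ℝ) hconv
  refine concaveOn_iff_forall_pos.2 ⟨hconv, fun x hx y hy a b ha hb hab => ?_⟩
  refine le_infDist_frontier hΩ hfr ?_
  have hdx := infDist_frontier_pos hΩ hfr hx
  have hdy := infDist_frontier_pos hΩ hfr hy
  calc ball (a • x + b • y) (a • infDist x (frontier Ω) + b • infDist y (frontier Ω))
      = a • ball x (infDist x (frontier Ω)) + b • ball y (infDist y (frontier Ω)) := by
        rw [_root_.smul_ball ha.ne', _root_.smul_ball hb.ne', Real.norm_of_nonneg ha.le,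
          Real.norm_of_nonneg hb.le, ball_add_ball (mul_pos ha hdx) (mul_pos hb hdy), smul_eq_mul,
          smul_eq_mul]
    _ ⊆ a • Ω + b • Ω := add_subset_add (smul_set_mono (ball_infDist_frontier_subset hx))
        (smul_set_mono (ball_infDist_frontier_subset hy))
    _ ⊆ Ω := hconv.set_combo_subset ha.le hb.le hab

theorem homothety_image_subset_infDist_frontier_gt (hconv : Convex ℝ Ω) (hΩ : IsOpen Ω)
    (hfr : (frontier Ω).Nonempty) {x₀ : E} (hx₀ : x₀ ∈ Ω) {t : ℝ} (ht : 0 ≤ t)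
    (htr : t < infDist x₀ (frontier Ω)) :
    homothety x₀ (1 - t / infDist x₀ (frontier Ω)) '' Ω ⊆
      {x ∈ Ω | t < infDist x (frontier Ω)} := by
  set r := infDist x₀ (frontier Ω)
  have hr : 0 < r := ht.trans_lt htr
  have hl : 0 < 1 - t / r := sub_pos.2 ((div_lt_one hr).2 htr)
  have htr' : 0 ≤ t / r := div_nonneg ht hr.le
  rintro _ ⟨p, hp, rfl⟩
  rw [homothety_eq_lineMap, lineMap_apply_module, sub_sub_cancel]
  refine ⟨hconv hx₀ hp htr' hl.le (by ring), ?_⟩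
  have hconc := (concaveOn_infDist_frontier hconv hΩ).2 hx₀ hp htr' hl.le (by ring)
  have hp' := mul_pos hl (infDist_frontier_pos hΩ hfr hp)
  have ht' : t / r * r = t := div_mul_cancel₀ t hr.ne'
  simp only [smul_eq_mul] at hconc
  linarith

theorem exists_add_smul_mem_frontier {L : Set E} (hL : IsBounded L) {z ν : E}
    (hz : z ∈ closure L) (hν : ν ≠ 0) :
    ∃ s : ℝ, 0 ≤ s ∧ z + s • ν ∈ frontier L := by
  obtain ⟨C, hC⟩ := hL.closure.subset_closedBall z
  have hν' : 0 < ‖ν‖ := norm_pos_iff.2 hν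
  set s₁ := (|C| + 1) / ‖ν‖
  have hs₁ : 0 ≤ s₁ := by positivity
  have hout : z + s₁ • ν ∉ closure L := fun h => by
    have := mem_closedBall.1 (hC h)
    rw [dist_eq_norm, add_sub_cancel_left, norm_smul, Real.norm_of_nonneg hs₁,
      div_mul_cancel₀ _ hν'.ne'] at this
    linarith [le_abs_self C]
  have hray : IsPreconnected ((fun s : ℝ => z + s • ν) '' Ici 0) :=
    isPreconnected_Ici.image _ (by fun_prop)
  obtain ⟨_, ⟨s, hs, rfl⟩, hw⟩ := hray.inter_frontier_nonempty
    ⟨z, ⟨0, mem_Ici.2 le_rfl, by simp⟩, hz⟩ ⟨_, ⟨s₁, hs₁, rfl⟩, hout⟩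
  exact ⟨s, hs, frontier_closure_subset hw⟩

end NormedSpace

section InnerProductSpace

variable {F : Type*} [NormedAddCommGroup F] [InnerProductSpace ℝ F] {K : Set F} {P : F → F}

/-- For convex `K`, the variational inequality characterizes the nearest point of `K`
(`norm_eq_iInf_iff_real_inner_le_zero`). -/
def IsMetricProjection (K : Set F) (P : F → F) : Prop :=
  ∀ u, P u ∈ K ∧ ∀ w ∈ K, ⟪u - P u, w - P u⟫ ≤ 0

theorem exists_isMetricProjection [CompleteSpace F] (hK : Convex ℝ K) (hKc : IsClosed K)
    (hne : K.Nonempty) : ∃ P, IsMetricProjection K P := by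
  choose P hPK hP using fun u => exists_norm_eq_iInf_of_complete_convex hne hKc.isComplete hK u
  exact ⟨P, fun u => ⟨hPK u, (norm_eq_iInf_iff_real_inner_le_zero hK (hPK u)).1 (hP u)⟩⟩

theorem norm_sub_sq_le_inner_of_inner_le_zero {a b p q : F} (hp : p ∈ K) (hq : q ∈ K)
    (hpa : ∀ w ∈ K, ⟪a - p, w - p⟫ ≤ 0) (hqb : ∀ w ∈ K, ⟪b - q, w - q⟫ ≤ 0) :
    ‖p - q‖ ^ 2 ≤ ⟪a - b, p - q⟫ := by
  have h1 := hpa q hq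
  have h2 := hqb p hp
  have e : ⟪a - b, p - q⟫ - ‖p - q‖ ^ 2 = ⟪a - p, p - q⟫ - ⟪b - q, p - q⟫ := by
    rw [← real_inner_self_eq_norm_sq, ← inner_sub_left, ← inner_sub_left]
    congr 1
    abel
  have e' : ⟪a - p, p - q⟫ = -⟪a - p, q - p⟫ := by rw [← inner_neg_right, neg_sub]
  linarith

theorem IsMetricProjection.lipschitzWith_one (hP : IsMetricProjection K P) :
    LipschitzWith 1 P := by
  refine LipschitzWith.of_dist_le_mul fun a b => ?_
  rw [NNReal.coe_one, one_mul, dist_eq_norm, dist_eq_norm]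
  have h := (norm_sub_sq_le_inner_of_inner_le_zero (hP a).1 (hP b).1 (hP a).2 (hP b).2).trans
    (real_inner_le_norm (a - b) (P a - P b))
  rw [sq] at h
  rcases (norm_nonneg (P a - P b)).eq_or_lt with h0 | h0
  · rw [← h0]; exact norm_nonneg _
  · exact le_of_mul_le_mul_right h h0

theorem IsMetricProjection.apply_eq (hP : IsMetricProjection K P) {u z : F} (hz : z ∈ K)
    (hzu : ∀ w ∈ K, ⟪u - z, w - z⟫ ≤ 0) : P u = z := by
  have h := norm_sub_sq_le_inner_of_inner_le_zero (hP u).1 hz (hP u).2 hzu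
  rw [sub_self, inner_zero_left, sq_nonpos_iff, norm_eq_zero, sub_eq_zero] at h
  exact h

theorem exists_ne_zero_inner_sub_nonpos_of_mem_frontier [CompleteSpace F] (hK : Convex ℝ K)
    (hKo : IsOpen K) {z : F} (hz : z ∈ frontier K) :
    ∃ ν ≠ 0, ∀ k ∈ closure K, ⟪ν, k - z⟫ ≤ 0 := by
  obtain ⟨f, hf⟩ := geometric_hahn_banach_open_point hK hKo (hKo.frontier_eq ▸ hz).2
  set ν := (InnerProductSpace.toDual ℝ F).symm f
  have hν : ∀ x, ⟪ν, x⟫ = f x := fun x => InnerProductSpace.toDual_symm_apply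
  have hle : ∀ k ∈ closure K, f k ≤ f z := fun k hk =>
    closure_minimal (fun a ha => (hf a ha).le) (isClosed_le f.continuous continuous_const) hk
  refine ⟨ν, fun h0 => ?_, fun k hk => ?_⟩
  · obtain ⟨a, ha⟩ := closure_nonempty_iff.1 ⟨z, frontier_subset_closure hz⟩
    have := hf a ha
    rw [← hν, ← hν, h0, inner_zero_left, inner_zero_left] at this
    exact lt_irrefl _ this
  · rw [inner_sub_right, hν, hν]
    linarith [hle k hk]

theorem hausdorffMeasure_frontier_le [CompleteSpace F] [MeasurableSpace F] [BorelSpace F]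
    {L : Set F} (hK : Convex ℝ K) (hKo : IsOpen K) (hL : IsBounded L) (hKL : K ⊆ closure L)
    {d : ℝ} (hd : 0 ≤ d) : μH[d] (frontier K) ≤ μH[d] (frontier L) := by
  rcases K.eq_empty_or_nonempty with rfl | hKne
  · simp
  obtain ⟨P, hP⟩ := exists_isMetricProjection hK.closure isClosed_closure hKne.closure
  have hsurj : frontier K ⊆ P '' frontier L := by
    intro z hz
    have hzK := frontier_subset_closure hz
    obtain ⟨ν, hν, hνK⟩ := exists_ne_zero_inner_sub_nonpos_of_mem_frontier hK hKo hz
    obtain ⟨s, hs, hw⟩ :=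
      exists_add_smul_mem_frontier hL (closure_minimal hKL isClosed_closure hzK) hν
    refine ⟨_, hw, hP.apply_eq hzK fun k hk => ?_⟩
    rw [add_sub_cancel_left, real_inner_smul_left]
    exact mul_nonpos_of_nonneg_of_nonpos hs (hνK k hk)
  calc μH[d] (frontier K) ≤ μH[d] (P '' frontier L) := measure_mono hsurj
    _ ≤ μH[d] (frontier L) := by
      simpa using hP.lipschitzWith_one.hausdorffMeasure_image_le hd (frontier L)

end InnerProductSpace

section Homothety

variable {𝕜 E : Type*} [NormedField 𝕜] [NormedAddCommGroup E] [NormedSpace 𝕜 E]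

theorem frontier_homothety_image (x : E) {c : 𝕜} (hc : c ≠ 0) (s : Set E) :
    frontier (homothety x c '' s) = homothety x c '' frontier s :=
  (IsHomeomorph.image_frontier ⟨homothety_continuous x c, homothety_isOpenMap x c hc,
    (AffineEquiv.homothetyUnitsMulHom x (Units.mk0 c hc)).bijective⟩ s).symm

theorem hausdorffMeasure_frontier_homothety_image [MeasurableSpace E] [BorelSpace E] {d : ℝ}
    (hd : 0 ≤ d) (x : E) {c : 𝕜} (hc : c ≠ 0) (s : Set E) :
    μH[d] (frontier (homothety x c '' s)) = ‖c‖₊ ^ d • μH[d] (frontier s) := by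
  rw [frontier_homothety_image x hc, hausdorffMeasure_homothety_image hd x hc]

end Homothety

theorem perim_mul_pow_le_perim {N : ℕ} (hN : 1 ≤ N) {Ω S : Set (EuclideanSpace ℝ (Fin N))}
    (hconv : Convex ℝ Ω) (hΩ : IsOpen Ω) (hbdd : IsBounded Ω) (hSconv : Convex ℝ S)
    (hS : IsOpen S) (hSΩ : S ⊆ Ω) {x₀ : EuclideanSpace ℝ (Fin N)} {l : ℝ} (hl : 0 < l)
    (hsub : homothety x₀ l '' Ω ⊆ S) :
    perim Ω * l ^ (N - 1) ≤ perim S := by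
  have hd : (0 : ℝ) ≤ N - 1 := sub_nonneg.2 (by exact_mod_cast hN)
  have hscale := hausdorffMeasure_frontier_homothety_image hd x₀ hl.ne' Ω
  have hinner := hausdorffMeasure_frontier_le (hconv.affine_image _)
    (homothety_isOpenMap x₀ l hl.ne' Ω hΩ) (hbdd.subset hSΩ) (hsub.trans subset_closure) hd
  have houter := hausdorffMeasure_frontier_le hSconv hS hbdd (hSΩ.trans subset_closure) hd
  have hpow : ((‖l‖₊ ^ ((N : ℝ) - 1) : ℝ≥0) : ℝ) = l ^ (N - 1) := by
    rw [NNReal.coe_rpow, coe_nnnorm, Real.norm_of_nonneg hl.le, ← Nat.cast_one,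
      ← Nat.cast_sub hN, Real.rpow_natCast]
  calc perim Ω * l ^ (N - 1)
        = (μH[(N : ℝ) - 1] (frontier (homothety x₀ l '' Ω))).toReal := by
        rw [hscale, ENNReal.toReal_smul, NNReal.smul_def, hpow, smul_eq_mul, mul_comm, perim]
    -- `toReal` sends `∞` to `0`: if `∂S` has infinite measure, so do `∂Ω` and its scaled copy
    _ ≤ perim S := ENNReal.toReal_mono' hinner fun htop => by
        rw [htop, top_le_iff] at houter
        rw [hscale, houter, ENNReal.smul_top,
          if_neg (NNReal.rpow_pos (nnnorm_pos.2 hl.ne')).ne']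

theorem stmt_17 (N : ℕ) (hN : 2 ≤ N) (Ω : Set (EuclideanSpace ℝ (Fin N)))
    (hconv : Convex ℝ Ω) (hopen : IsOpen Ω) (hbdd : Bornology.IsBounded Ω)
    (hne : Ω.Nonempty) (t : ℝ) (ht : 0 ≤ t) :
    Convex ℝ {x ∈ Ω | t < distBdry Ω x} ∧
      perim Ω * max (1 - t / inradius Ω) 0 ^ (N - 1) ≤
        perim {x ∈ Ω | t < distBdry Ω x} := by
  have : Nontrivial (EuclideanSpace ℝ (Fin N)) := by
    have : Nonempty (Fin N) := ⟨⟨0, by omega⟩⟩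
    infer_instance
  have hfr : (frontier Ω).Nonempty :=
    nonempty_frontier_iff.2 ⟨hne, fun h => NormedSpace.unbounded_univ ℝ _ (h ▸ hbdd)⟩
  have hconc := concaveOn_infDist_frontier hconv hopen
  refine ⟨hconc.convex_gt t, ?_⟩
  obtain ⟨x₀, hx₀, hmax⟩ := exists_isMaxOn_infDist_frontier hbdd hne
  have hr : inradius Ω = distBdry Ω x₀ := Real.biSup_eq_of_isMaxOn hx₀ hmax infDist_nonneg
  have hr0 : 0 < distBdry Ω x₀ := infDist_frontier_pos hopen hfr hx₀
  rw [hr]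
  rcases lt_or_ge t (distBdry Ω x₀) with htr | htr
  · have hl : 0 < 1 - t / distBdry Ω x₀ := sub_pos.2 ((div_lt_one hr0).2 htr)
    rw [max_eq_left hl.le]
    exact perim_mul_pow_le_perim (by omega) hconv hopen hbdd (hconc.convex_gt t)
      (hopen.inter (isOpen_lt continuous_const (continuous_infDist_pt _))) (sep_subset _ _) hl
      (homothety_image_subset_infDist_frontier_gt hconv hopen hfr hx₀ ht htr)
  · rw [max_eq_right (sub_nonpos.2 ((le_div_iff₀ hr0).2 (by linarith))),
      zero_pow (by omega), mul_zero]
    exact ENNReal.toReal_nonneg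
end

section
/- Let $A(t)$, $L(t)$ be real functions on $[0,r]$ ($r>0$) with $L$ integrable and nonnegative, and let $\gamma(t)=(1-\alpha t)$ with $0<\alpha\le 1/r$. Suppose $t\mapsto L(t)^{1/(N-1)}$ is concave on $[0,r]$ ($N\ge 2$), $L(0)^{1/(N-1)}=\gamma(0)=1$, $L(r)=0$, and $\int_0^r L(t)\,dt = \int_0^r \gamma(t)^{N-1}\,dt$. Then for every $\beta\ge 0$: $\int_0^r t^{\beta} L(t)\,dt \le \int_0^r t^{\beta}(1-\alpha t)^{N-1}\,dt$. -/
theorem stmt_19 (N : ℕ) (hN : 2 ≤ N) (r α β : ℝ) (hr : 0 < r) (hα : 0 < α)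
    (hαr : α ≤ 1 / r) (hβ : 0 ≤ β)
    (L : ℝ → ℝ)
    (hL_int : IntervalIntegrable L MeasureTheory.volume 0 r)
    (hL_nonneg : ∀ t ∈ Set.Icc 0 r, 0 ≤ L t)
    (hL_conc : ConcaveOn ℝ (Set.Icc 0 r) (fun t => L t ^ ((1 : ℝ) / ((N : ℝ) - 1))))
    (hL0 : L 0 = 1) (hLr : L r = 0)
    (hmass : (∫ t in (0:ℝ)..r, L t) = ∫ t in (0:ℝ)..r, (1 - α * t) ^ (N - 1)) :
    (∫ t in (0:ℝ)..r, t ^ β * L t) ≤ ∫ t in (0:ℝ)..r, t ^ β * (1 - α * t) ^ (N - 1) := by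
  set p : ℝ := (1 : ℝ) / ((N : ℝ) - 1) with hp_def
  have hN1 : (0:ℝ) < (N:ℝ) - 1 := by
    have : (2:ℝ) ≤ (N:ℝ) := by exact_mod_cast hN
    linarith
  have hNcast : ((N - 1 : ℕ) : ℝ) = (N:ℝ) - 1 := by
    have : 1 ≤ N := by omega
    push_cast [Nat.cast_sub this]
    ring
  have hNne : N - 1 ≠ 0 := by omega
  -- identity (x^p)^(N-1) = x for x ≥ 0
  have hid : ∀ x : ℝ, 0 ≤ x → (x ^ p) ^ (N - 1) = x := by
    intro x hx
    rw [← Real.rpow_natCast (x ^ p) (N - 1), ← Real.rpow_mul hx]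
    rw [hNcast, hp_def]
    rw [one_div, inv_mul_cancel₀ (ne_of_gt hN1), Real.rpow_one]
  have hiff : ∀ x y : ℝ, 0 ≤ x → 0 ≤ y → (x ≤ y ^ (N - 1) ↔ x ^ p ≤ y) := by
    intro x y hx hy
    conv_lhs => rw [← hid x hx]
    exact pow_le_pow_iff_left₀ (Real.rpow_nonneg hx p) hy hNne
  have hiff' : ∀ x y : ℝ, 0 ≤ x → 0 ≤ y → (y ^ (N - 1) ≤ x ↔ y ≤ x ^ p) := by
    intro x y hx hy
    conv_lhs => rw [← hid x hx]
    exact pow_le_pow_iff_left₀ hy (Real.rpow_nonneg hx p) hNne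
  set d : ℝ → ℝ := fun t => L t ^ p - (1 - α * t) with hd_def
  have hd0 : d 0 = 0 := by
    simp [hd_def, hL0]
  have hdr : d r ≤ 0 := by
    have : (0:ℝ) ^ p = 0 := by
      apply Real.zero_rpow
      rw [hp_def]
      positivity
    have hγr : 0 ≤ 1 - α * r := by
      have h := mul_le_mul_of_nonneg_right hαr hr.le
      rw [one_div_mul_cancel hr.ne'] at h
      linarith
    simp only [hd_def, hLr, this]
    linarith
  -- d is concave on [0,r]
  have hd_conc : ConcaveOn ℝ (Set.Icc 0 r) d := by
    have haff : ConcaveOn ℝ (Set.Icc (0:ℝ) r) (fun t => α * t - 1) := by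
      refine ⟨convex_Icc 0 r, ?_⟩
      intro x hx y hy a b ha hb hab
      simp only [smul_eq_mul]
      exact le_of_eq (by linear_combination (α * x - 1) * hab - (α*x-1)*hab + (-1:ℝ) * hab)
    have := hL_conc.add haff
    convert this using 1
    · rfl
    funext t
    simp [hd_def]
    ring
  -- key: sign propagation down
  have hd_down : ∀ s t : ℝ, 0 ≤ t → t ≤ s → s ≤ r → 0 ≤ d s → 0 ≤ d t := by
    intro s t ht hts hsr hds
    rcases eq_or_lt_of_le (le_trans ht hts) with hs0 | hs0
    · have : t = 0 := le_antisymm (hs0 ▸ hts) ht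
      rw [this, hd0]
    · have hb : 0 ≤ t / s := div_nonneg ht hs0.le
      have hb1 : t / s ≤ 1 := div_le_one_of_le₀ hts hs0.le
      have hmem0 : (0:ℝ) ∈ Set.Icc (0:ℝ) r := ⟨le_refl 0, le_trans (le_trans ht hts) hsr⟩
      have hmems : s ∈ Set.Icc (0:ℝ) r := ⟨hs0.le, hsr⟩
      have := hd_conc.2 hmem0 hmems (by linarith : (0:ℝ) ≤ 1 - t/s) hb (by ring)
      simp only [smul_eq_mul, mul_zero, zero_add] at this
      have hts' : t/s * s = t := div_mul_cancel₀ t hs0.ne'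
      rw [hts', hd0] at this
      have h2 : 0 ≤ t/s * d s := mul_nonneg hb hds
      clear_value d p
      linarith
  -- define the switching point
  set S : Set ℝ := {t | t ∈ Set.Icc (0:ℝ) r ∧ 0 ≤ d t} with hS_def
  have hS0 : (0:ℝ) ∈ S := ⟨⟨le_refl 0, hr.le⟩, by rw [hd0]⟩
  have hSne : S.Nonempty := ⟨0, hS0⟩
  have hSbdd : BddAbove S := ⟨r, fun x hx => hx.1.2⟩
  set T : ℝ := sSup S with hT_def
  have hT0 : 0 ≤ T := le_csSup hSbdd hS0
  have hTr : T ≤ r := csSup_le hSne (fun x hx => hx.1.2)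
  have hA : ∀ t, 0 ≤ t → t < T → 0 ≤ d t := by
    intro t ht htT
    obtain ⟨s, hsS, hts⟩ := exists_lt_of_lt_csSup hSne htT
    exact hd_down s t ht hts.le hsS.1.2 hsS.2
  have hB : ∀ t, T < t → t ≤ r → d t ≤ 0 := by
    intro t hTt htr
    by_contra h
    push_neg at h
    have : t ∈ S := ⟨⟨le_trans hT0 hTt.le, htr⟩, h.le⟩
    exact absurd (le_csSup hSbdd this) (not_le.mpr hTt)
  -- pointwise product inequality
  have hγpos : ∀ t ∈ Set.Icc (0:ℝ) r, 0 ≤ 1 - α * t := by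
    intro t ht
    have h := mul_le_mul_of_nonneg_right hαr hr.le
    rw [one_div_mul_cancel hr.ne'] at h
    nlinarith [ht.1, ht.2, hα.le]
  have hpt : ∀ t ∈ Set.Icc (0:ℝ) r,
      (t ^ β - T ^ β) * (L t - (1 - α * t) ^ (N - 1)) ≤ 0 := by
    intro t ht
    rcases lt_trichotomy t T with hlt | heq | hgt
    · have h1 : t ^ β ≤ T ^ β := Real.rpow_le_rpow ht.1 hlt.le hβ
      have h2 : (1 - α * t) ^ (N - 1) ≤ L t := by
        rw [hiff' (L t) (1 - α*t) (hL_nonneg t ht) (hγpos t ht)]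
        have := hA t ht.1 hlt
        simp only [hd_def] at this
        linarith
      exact mul_nonpos_of_nonpos_of_nonneg (by linarith) (by linarith)
    · rw [heq]; simp
    · have h1 : T ^ β ≤ t ^ β := Real.rpow_le_rpow hT0 hgt.le hβ
      have h2 : L t ≤ (1 - α * t) ^ (N - 1) := by
        rw [hiff (L t) (1 - α*t) (hL_nonneg t ht) (hγpos t ht)]
        have := hB t hgt ht.2
        simp only [hd_def] at this
        linarith
      exact mul_nonpos_of_nonneg_of_nonpos (by linarith) (by linarith)
  -- integrability facts
  have hcont_rpow : ContinuousOn (fun t : ℝ => t ^ β) (Set.uIcc 0 r) :=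
    fun t _ => (Real.continuousAt_rpow_const t β (Or.inr hβ)).continuousWithinAt
  have hg_cont : Continuous (fun t : ℝ => (1 - α * t) ^ (N - 1)) :=
    (continuous_const.sub (continuous_const.mul continuous_id)).pow _
  have hg_int : IntervalIntegrable (fun t : ℝ => (1 - α * t) ^ (N - 1))
      MeasureTheory.volume 0 r := hg_cont.intervalIntegrable 0 r
  have h1_int : IntervalIntegrable (fun t : ℝ => t ^ β * L t)
      MeasureTheory.volume 0 r := hL_int.continuousOn_mul hcont_rpow
  have h2_int : IntervalIntegrable (fun t : ℝ => t ^ β * (1 - α * t) ^ (N - 1))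
      MeasureTheory.volume 0 r := hg_int.continuousOn_mul hcont_rpow
  have h3_int : IntervalIntegrable (fun t : ℝ => T ^ β * L t)
      MeasureTheory.volume 0 r := hL_int.const_mul _
  have h4_int : IntervalIntegrable (fun t : ℝ => T ^ β * (1 - α * t) ^ (N - 1))
      MeasureTheory.volume 0 r := hg_int.const_mul _
  -- the key integral inequality
  have hkey : (∫ t in (0:ℝ)..r,
      ((t ^ β * L t - t ^ β * (1 - α * t) ^ (N - 1)) -
       (T ^ β * L t - T ^ β * (1 - α * t) ^ (N - 1)))) ≤ 0 := by
    have heqfun : ∀ t : ℝ,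
        ((t ^ β * L t - t ^ β * (1 - α * t) ^ (N - 1)) -
         (T ^ β * L t - T ^ β * (1 - α * t) ^ (N - 1))) =
        (t ^ β - T ^ β) * (L t - (1 - α * t) ^ (N - 1)) := by
      intro t; ring
    simp_rw [heqfun]
    have := intervalIntegral.integral_nonneg (μ := MeasureTheory.volume) (f := fun t =>
        -((t ^ β - T ^ β) * (L t - (1 - α * t) ^ (N - 1)))) hr.le
      (fun u hu => by simpa using hpt u hu)
    rw [intervalIntegral.integral_neg] at this
    linarith
  rw [intervalIntegral.integral_sub (h1_int.sub h2_int) (h3_int.sub h4_int),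
      intervalIntegral.integral_sub h1_int h2_int,
      intervalIntegral.integral_sub h3_int h4_int] at hkey
  rw [intervalIntegral.integral_const_mul, intervalIntegral.integral_const_mul] at hkey
  rw [hmass] at hkey
  linarith
end
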